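/- Let D be a 3×3 complex matrix (entries D_{ij}, 0-based indexing, row i and column j). The linear map x ↦ D·x on ℂ³ is a derivation of the 3-dimensional Mock-Lie algebra A_{1,3} if and only if D_{01} = 0, D_{21} = 0, D_{00} = D_{22}, D_{02} = −D_{20}, and D_{11} = 2·D_{22}. Equivalently, the derivations are exactly the linear maps whose matrix relative to the basis (e_1, e_2, e_3) has the form [[d_{33}, 0, −d_{31}], [d_{21}, 2d_{33}, d_{23}], [d_{31}, 0, d_{33}]]. -/

import Mathlib

/-!
Writing `q(x, y) = x₀y₀ + x₂y₂` for the bilinear form with Gram matrix `J = diag(1, 0, 1)`, the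
product of `A_{1,3}` is `x · y = q(x, y) e₂`. For such a rank-one product the Leibniz rule reads
`q(x, y) D e₂ = q(Dx, y) e₂ + q(x, Dy) e₂`, so `D` is a derivation exactly when `e₂` is an
eigenvector of `D`, say `D e₂ = λ e₂`, and `D` is infinitesimally conformal for `q`:
`Dᵀ J + J D = λ J`. Reading off the entries of these two conditions gives the theorem.
-/

/-- The product of the 3-dimensional Mock-Lie algebra `A_{1,3}`:
`e_1 · e_1 = e_2`, `e_3 · e_3 = e_2`, all other products of basis vectors zero. -/
def mulA13 (x y : Fin 3 → ℂ) : Fin 3 → ℂ := ![0, x 0 * y 0 + x 2 * y 2, 0]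

open Matrix

section RankOne

variable {R : Type*} [CommRing R] {n : Type*} [Fintype n]

def IsDerivationMatrix (mul : (n → R) → (n → R) → n → R) (D : Matrix n n R) : Prop :=
  ∀ x y, D *ᵥ mul x y = mul (D *ᵥ x) y + mul x (D *ᵥ y)

def formProduct (J : Matrix n n R) (v : n → R) (x y : n → R) : n → R :=
  (x ⬝ᵥ J *ᵥ y) • v

theorem mulVec_dotProduct_mulVec_add_dotProduct_mulVec_mulVec (D J : Matrix n n R)
    (x y : n → R) :
    (D *ᵥ x) ⬝ᵥ J *ᵥ y + x ⬝ᵥ J *ᵥ (D *ᵥ y) = x ⬝ᵥ (Dᵀ * J + J * D) *ᵥ y := by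
  rw [add_mulVec, dotProduct_add, ← mulVec_mulVec, ← mulVec_mulVec, dotProduct_mulVec x Dᵀ,
    vecMul_transpose]

theorem single_one_dotProduct_mulVec_single_one [DecidableEq n] (A : Matrix n n R) (i j : n) :
    Pi.single i 1 ⬝ᵥ A *ᵥ Pi.single j 1 = A i j := by
  simp

theorem isDerivationMatrix_formProduct_iff (D J : Matrix n n R) (v : n → R) :
    IsDerivationMatrix (formProduct J v) D ↔
      ∀ x y, (x ⬝ᵥ J *ᵥ y) • (D *ᵥ v) = (x ⬝ᵥ (Dᵀ * J + J * D) *ᵥ y) • v := by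
  simp only [IsDerivationMatrix, formProduct, mulVec_smul, ← add_smul,
    mulVec_dotProduct_mulVec_add_dotProduct_mulVec_mulVec]

end RankOne

theorem forall_smul_eq_smul_single_iff {K : Type*} [Field K] {n : Type*} [Fintype n]
    [DecidableEq n] {J A : Matrix n n K} (hJ : J ≠ 0) (w : n → K) (k : n) :
    (∀ x y, (x ⬝ᵥ J *ᵥ y) • w = (x ⬝ᵥ A *ᵥ y) • Pi.single k 1) ↔
      w = Pi.single k (w k) ∧ A = w k • J := by
  constructor
  · intro h
    have h_basis (i j : n) : J i j • w = A i j • Pi.single k 1 := by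
      simpa only [single_one_dotProduct_mulVec_single_one] using h (Pi.single i 1) (Pi.single j 1)
    obtain ⟨i, j, hij⟩ : ∃ i j, J i j ≠ 0 := by
      by_contra! h0
      exact hJ (Matrix.ext h0)
    have hw : w = Pi.single k (w k) := by
      ext l
      rcases eq_or_ne l k with rfl | hl
      · simp
      · simpa [hl, hij] using congr_fun (h_basis i j) l
    refine ⟨hw, Matrix.ext fun a b => ?_⟩
    simpa [mul_comm] using (congr_fun (h_basis a b) k).symm
  · rintro ⟨hw, rfl⟩ x y
    rw [hw, smul_mulVec, dotProduct_smul, ← Pi.single_smul', ← Pi.single_smul', smul_eq_mul,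
      smul_eq_mul, smul_eq_mul, mul_one, Pi.single_eq_same, mul_comm]

theorem isDerivationMatrix_formProduct_single_iff {K : Type*} [Field K] {n : Type*} [Fintype n]
    [DecidableEq n] {J : Matrix n n K} (hJ : J ≠ 0) (D : Matrix n n K) (k : n) :
    IsDerivationMatrix (formProduct J (Pi.single k 1)) D ↔
      D.col k = Pi.single k (D k k) ∧ Dᵀ * J + J * D = D k k • J := by
  rw [isDerivationMatrix_formProduct_iff, mulVec_single_one, forall_smul_eq_smul_single_iff hJ,
    col_apply]

theorem mulA13_eq_formProduct :
    mulA13 = formProduct (diagonal ![1, 0, 1]) (Pi.single 1 1) := by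
  ext x y i
  fin_cases i <;> simp [mulA13, formProduct, dotProduct, Fin.sum_univ_three, mulVec_diagonal]

theorem transpose_mul_add_mul_diagonal_eq_smul_iff (D : Matrix (Fin 3) (Fin 3) ℂ) :
    Dᵀ * diagonal ![1, 0, 1] + diagonal ![1, 0, 1] * D = D 1 1 • diagonal ![1, 0, 1] ↔
      D 0 1 = 0 ∧ D 2 1 = 0 ∧ D 0 0 = D 2 2 ∧ D 0 2 = -D 2 0 ∧ D 1 1 = 2 * D 2 2 := by
  constructor
  · intro h
    have entry (i j : Fin 3) := congr_fun₂ h i j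
    have h00 := entry 0 0
    have h01 := entry 0 1
    have h02 := entry 0 2
    have h21 := entry 2 1
    have h22 := entry 2 2
    simp [mul_diagonal, diagonal_mul] at h00 h01 h02 h21 h22
    exact ⟨h01, h21, by linear_combination (h00 - h22) / 2, by linear_combination h02,
      by linear_combination -h22⟩
  · rintro ⟨h01, h21, h00, h02, h11⟩
    ext i j
    fin_cases i <;> fin_cases j <;> simp [mul_diagonal, diagonal_mul, h01, h21, h00, h02, h11] <;>
      ring

/-- `x ↦ D · x` is a derivation of `A_{1,3}` iff `D 0 1 = 0`, `D 2 1 = 0`,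
`D 0 0 = D 2 2`, `D 0 2 = -D 2 0` and `D 1 1 = 2 * D 2 2`. -/
theorem derivation_A13_iff (D : Matrix (Fin 3) (Fin 3) ℂ) :
    (∀ x y : Fin 3 → ℂ,
        D.mulVec (mulA13 x y) = mulA13 (D.mulVec x) y + mulA13 x (D.mulVec y)) ↔
      (D 0 1 = 0 ∧ D 2 1 = 0 ∧ D 0 0 = D 2 2 ∧ D 0 2 = -D 2 0 ∧ D 1 1 = 2 * D 2 2) := by
  have hJ : (diagonal ![1, 0, 1] : Matrix (Fin 3) (Fin 3) ℂ) ≠ 0 := fun h => by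
    simpa using congr_fun₂ h 0 0
  change IsDerivationMatrix mulA13 D ↔ _
  rw [mulA13_eq_formProduct, isDerivationMatrix_formProduct_single_iff hJ,
    transpose_mul_add_mul_diagonal_eq_smul_iff, and_iff_right_of_imp]
  rintro ⟨h01, h21, -⟩
  ext i
  fin_cases i <;> simp [h01, h21]
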